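/- Let 0 < α < 1 and γ > 0. Then the integral ∫_{ℝ^n} |e^{2πi⟨y,θ⟩} − 1|² ρ(y)^{−γ−2α} dy is finite, uniformly bounded over unit vectors θ ∈ S^{n−1}, where ρ is the anisotropic norm with trace γ = Σ a_j. -/

import Mathlib

/-!
Split `ℝⁿ ∖ {0}` into the shells `2^k ≤ ρ < 2^(k+1)`, `k ∈ ℤ`. Since `|e^{iv} - 1|² ≤ min(v², 4)`
and `|⟨y, θ⟩| ≤ |y| ≤ ρ(y)` when `ρ(y) < 1`, the integrand is at most
`min(4π² 4^(k+1), 4) 2^(-k(γ + 2α))` on the `k`-th shell, while `ρ(A_t x) = t ρ(x)` and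
`det A_t = t^γ` bound the volume of the shell by `2^((k+1)γ) |{ρ < 1}|`. The resulting series
`∑ₖ min(4^k, 1) 4^(-αk)` converges on both sides because `0 < α < 1`.
-/

open MeasureTheory Real Complex
open scoped FourierTransform ENNReal

noncomputable section

/-- The anisotropic dilation `A_t x = (t^{a_1} x_1, …, t^{a_n} x_n)`. -/
def dil (n : ℕ) (a : Fin n → ℝ) (t : ℝ) (x : EuclideanSpace ℝ (Fin n)) :
    EuclideanSpace ℝ (Fin n) :=
  WithLp.toLp 2 (fun j => t ^ a j * x j)

lemma norm_exp_mul_I_sub_one_sq_le (v : ℝ) : ‖cexp (v * I) - 1‖ ^ 2 ≤ min (v ^ 2) 4 := by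
  have h : ‖cexp (v * I) - 1‖ ^ 2 = 2 - 2 * Real.cos v := by
    rw [exp_mul_I, ← ofReal_cos, ← ofReal_sin,
      show (Real.cos v : ℂ) + Real.sin v * I - 1 = ((Real.cos v - 1 : ℝ) : ℂ) + (Real.sin v : ℝ) * I
        by push_cast; ring,
      Complex.sq_norm, normSq_add_mul_I]
    nlinarith [Real.sin_sq_add_cos_sq v]
  rw [h]
  exact le_min (by nlinarith [Real.one_sub_sq_div_two_le_cos (x := v)])
    (by nlinarith [Real.neg_one_le_cos v])

lemma summable_min_mul_zpow_mul_zpow {p q C D : ℝ} (hC : 0 ≤ C) (hD : 0 ≤ D) (hq : 0 < q)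
    (hq1 : q < 1) (hpq : 1 < p * q) : Summable fun k : ℤ => min (C * p ^ k) D * q ^ k := by
  have hp : 0 < p := pos_of_mul_pos_left (one_pos.trans hpq) hq.le
  have hnonneg (k : ℤ) : 0 ≤ min (C * p ^ k) D * q ^ k := by positivity
  apply Summable.of_nat_of_neg
  · refine .of_nonneg_of_le (fun m => hnonneg m) (fun m => ?_)
      ((summable_geometric_of_lt_one hq.le hq1).mul_left D)
    simpa using mul_le_mul_of_nonneg_right (min_le_right _ D) (pow_nonneg hq.le m)
  · refine .of_nonneg_of_le (fun m => hnonneg _) (fun m => ?_)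
      ((summable_geometric_of_lt_one (inv_pos.2 (one_pos.trans hpq)).le
        (inv_lt_one_of_one_lt₀ hpq)).mul_left C)
    calc min (C * p ^ (-(m : ℤ))) D * q ^ (-(m : ℤ))
        ≤ C * p ^ (-(m : ℤ)) * q ^ (-(m : ℤ)) := by gcongr; exact min_le_left _ _
      _ = C * (p * q)⁻¹ ^ m := by
        rw [zpow_neg, zpow_neg, zpow_natCast, zpow_natCast, mul_assoc, ← mul_inv, ← mul_pow,
          inv_pow]

section Dilation

variable {n : ℕ} {a : Fin n → ℝ}

lemma continuous_dil (ha : ∀ j, 0 ≤ a j) (y : EuclideanSpace ℝ (Fin n)) :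
    Continuous fun t => dil n a t y :=
  (PiLp.continuous_toLp 2 _).comp <| continuous_pi fun j =>
    (Real.continuous_rpow_const (ha j)).mul continuous_const

lemma dil_zero (ha : ∀ j, a j ≠ 0) (y : EuclideanSpace ℝ (Fin n)) : dil n a 0 y = 0 := by
  ext j; simp [dil, Real.zero_rpow (ha j)]

lemma dil_one (y : EuclideanSpace ℝ (Fin n)) : dil n a 1 y = y := by
  ext j; simp [dil]

lemma dil_dil {s t : ℝ} (hs : 0 ≤ s) (ht : 0 ≤ t) (y : EuclideanSpace ℝ (Fin n)) :
    dil n a s (dil n a t y) = dil n a (s * t) y := by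
  ext j; simp [dil, Real.mul_rpow hs ht, mul_assoc]

variable (n a) in
def dilLinearMap (t : ℝ) : EuclideanSpace ℝ (Fin n) →ₗ[ℝ] EuclideanSpace ℝ (Fin n) where
  toFun := dil n a t
  map_add' x y := by ext j; simp [dil, mul_add]
  map_smul' c x := by ext j; simp [dil]; ring

lemma det_dilLinearMap {t : ℝ} (ht : 0 < t) :
    LinearMap.det (dilLinearMap n a t) = t ^ ∑ j, a j := by
  classical
  rw [← LinearMap.det_toMatrix (EuclideanSpace.basisFun (Fin n) ℝ).toBasis,
    show LinearMap.toMatrix _ _ (dilLinearMap n a t) = Matrix.diagonal fun j => t ^ a j by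
      ext i j
      simp [LinearMap.toMatrix_apply, dilLinearMap, dil, Matrix.diagonal, eq_comm],
    Matrix.det_diagonal, Real.rpow_sum_of_pos ht]

end Dilation

section HomogeneousNorm

variable {n : ℕ} {a : Fin n → ℝ} {ρ : EuclideanSpace ℝ (Fin n) → ℝ}
  (hρhom : ∀ t : ℝ, 0 < t → ∀ x, ρ (dil n a t x) = t * ρ x)
include hρhom

lemma image_dil_setOf_lt_one {t : ℝ} (ht : 0 < t) :
    dil n a t '' {y | ρ y < 1} = {y | ρ y < t} := by
  ext y
  constructor
  · rintro ⟨x, hx, rfl⟩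
    simpa [hρhom t ht] using mul_lt_mul_of_pos_left hx ht
  · intro hy
    refine ⟨dil n a t⁻¹ y, ?_, ?_⟩
    · simpa [hρhom _ (inv_pos.2 ht), inv_mul_lt_one₀ ht] using hy
    · rw [dil_dil ht.le (inv_nonneg.2 ht.le), mul_inv_cancel₀ ht.ne', dil_one]

lemma addHaar_setOf_lt (μ : Measure (EuclideanSpace ℝ (Fin n))) [μ.IsAddHaarMeasure]
    {t : ℝ} (ht : 0 < t) :
    μ {y | ρ y < t} = ENNReal.ofReal (t ^ ∑ j, a j) * μ {y | ρ y < 1} := by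
  rw [← image_dil_setOf_lt_one hρhom ht, ← show ⇑(dilLinearMap n a t) = dil n a t from rfl,
    Measure.addHaar_image_linearMap, det_dilLinearMap ht, abs_of_nonneg (by positivity)]

lemma setLIntegral_shell_le (hρ : Measurable ρ) (ha : ∀ j, 0 ≤ a j) {s : ℝ} (hs : 0 ≤ s)
    (c : ℝ) {D : ℝ} (hD : 0 ≤ D) (k : ℤ) :
    ∫⁻ y in ρ ⁻¹' Set.Ico ((2 : ℝ) ^ k) (2 ^ (k + 1)),
        ENNReal.ofReal (min ((c * ρ y) ^ 2) D * ρ y ^ (-(∑ j, a j) - s))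
      ≤ ENNReal.ofReal (min (4 * c ^ 2 * 4 ^ k) D * 2 ^ (∑ j, a j) * (2 ^ (-s)) ^ k)
        * volume {y | ρ y < 1} := by
  set γ := ∑ j, a j
  have hγ : 0 ≤ γ := Finset.sum_nonneg fun j _ => ha j
  have h2k : (0 : ℝ) < 2 ^ k := by positivity
  have h2 : (2 : ℝ) ^ (k + 1) = 2 * 2 ^ k := by rw [zpow_add_one₀ two_ne_zero, mul_comm]
  have h4 : ((2 : ℝ) ^ k) ^ 2 = 4 ^ k := by
    rw [← zpow_natCast, ← zpow_mul, mul_comm, zpow_mul]; norm_num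
  have hrpow : ((2 : ℝ) ^ k) ^ (-s) = (2 ^ (-s)) ^ k := by
    rw [← Real.rpow_intCast_mul two_pos.le, mul_comm, Real.rpow_mul_intCast two_pos.le]
  calc ∫⁻ y in ρ ⁻¹' Set.Ico (2 ^ k) (2 ^ (k + 1)),
        ENNReal.ofReal (min ((c * ρ y) ^ 2) D * ρ y ^ (-γ - s))
      ≤ ∫⁻ y in ρ ⁻¹' Set.Ico (2 ^ k) (2 ^ (k + 1)),
          ENNReal.ofReal (min ((c * 2 ^ (k + 1)) ^ 2) D * (2 ^ k) ^ (-γ - s)) := by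
        refine setLIntegral_mono' (hρ measurableSet_Ico) fun y ⟨hyk, hyk1⟩ => ?_
        have hρy := h2k.trans_le hyk
        gcongr ENNReal.ofReal (min ?_ D * ?_)
        · rw [mul_pow, mul_pow]
          gcongr
        · exact Real.rpow_le_rpow_of_nonpos h2k hyk (by linarith)
    _ ≤ ENNReal.ofReal (min ((c * 2 ^ (k + 1)) ^ 2) D * (2 ^ k) ^ (-γ - s))
          * (ENNReal.ofReal (((2 : ℝ) ^ (k + 1)) ^ γ) * volume {y | ρ y < 1}) := by
        rw [setLIntegral_const, ← addHaar_setOf_lt hρhom volume (by positivity)]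
        gcongr
        exact fun y hy => hy.2
    _ = ENNReal.ofReal (min ((c * 2 ^ (k + 1)) ^ 2) D * (2 ^ k) ^ (-γ - s) * (2 ^ (k + 1)) ^ γ)
          * volume {y | ρ y < 1} := by
        rw [← mul_assoc, ← ENNReal.ofReal_mul (by positivity)]
    _ = ENNReal.ofReal (min (4 * c ^ 2 * 4 ^ k) D * 2 ^ γ * ((2 ^ k) ^ (-γ - s) * (2 ^ k) ^ γ))
          * volume {y | ρ y < 1} := by
        rw [h2, Real.mul_rpow two_pos.le h2k.le, mul_pow, mul_pow, h4]; ring_nf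
    _ = _ := by rw [← Real.rpow_add h2k, show -γ - s + γ = -s by ring, hrpow]

variable (hρle : ∀ x : EuclideanSpace ℝ (Fin n), ‖x‖ ≤ 1 → ‖x‖ ≤ ρ x)
include hρle

lemma norm_le_one_of_lt_one (ha : ∀ j, 0 < a j) {y : EuclideanSpace ℝ (Fin n)} (hy : ρ y < 1) :
    ‖y‖ ≤ 1 := by
  -- otherwise some `A_s y` with `0 < s ≤ 1` lies on the unit sphere, where `1 ≤ ρ (A_s y) = s ρ y`
  by_contra! hy1
  have hdil0 := dil_zero (fun j => (ha j).ne') y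
  obtain ⟨s, ⟨hs0, hs1⟩, hs⟩ : ∃ s ∈ Set.Icc (0 : ℝ) 1, ‖dil n a s y‖ = 1 :=
    intermediate_value_Icc zero_le_one (continuous_dil (fun j => (ha j).le) y).norm.continuousOn
      (by simp [hdil0, dil_one, hy1.le])
  have hs0' : 0 < s := hs0.lt_of_ne (by rintro rfl; simp [hdil0] at hs)
  have := hρle _ hs.le
  rw [hs, hρhom s hs0'] at this
  nlinarith

lemma norm_le_of_lt_one (ha : ∀ j, 0 < a j) {y : EuclideanSpace ℝ (Fin n)} (hy : ρ y < 1) :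
    ‖y‖ ≤ ρ y :=
  hρle y (norm_le_one_of_lt_one hρhom hρle ha hy)

lemma addHaar_setOf_lt_one_lt_top (μ : Measure (EuclideanSpace ℝ (Fin n))) [μ.IsAddHaarMeasure]
    (ha : ∀ j, 0 < a j) : μ {y | ρ y < 1} < ⊤ :=
  (Metric.isBounded_closedBall (x := 0) (r := 1)).subset (fun y hy => by
    simpa using norm_le_one_of_lt_one hρhom hρle ha hy) |>.measure_lt_top

lemma sq_norm_exp_sum_mul_sub_one_le (ha : ∀ j, 0 < a j) {θ : EuclideanSpace ℝ (Fin n)}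
    (hθ : ‖θ‖ = 1) (y : EuclideanSpace ℝ (Fin n)) :
    ‖cexp (2 * π * (∑ j, y j * θ j) * I) - 1‖ ^ 2 ≤ min ((2 * π * ρ y) ^ 2) 4 := by
  have hy : |∑ j, y j * θ j| ≤ ‖y‖ := by
    simpa [hθ, PiLp.inner_apply, mul_comm] using abs_real_inner_le_norm y θ
  have hcast : (2 * π * (∑ j, y j * θ j) * I : ℂ) = ((2 * π * ∑ j, y j * θ j : ℝ) : ℂ) * I := by
    push_cast; ring
  rw [hcast]
  refine (norm_exp_mul_I_sub_one_sq_le _).trans ?_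
  rcases lt_or_ge (ρ y) 1 with hρ | hρ
  · have hyρ := norm_le_of_lt_one hρhom hρle ha hρ
    refine min_le_min_right 4 (sq_le_sq.2 ?_)
    rw [abs_mul, abs_mul _ (ρ y), abs_of_pos Real.two_pi_pos,
      abs_of_nonneg ((norm_nonneg y).trans hyρ)]
    gcongr
    exact hy.trans hyρ
  · refine (min_le_right _ _).trans (le_min ?_ le_rfl)
    have : 2 ≤ 2 * π * ρ y := by nlinarith [Real.pi_gt_three]
    calc (4 : ℝ) = 2 ^ 2 := by norm_num
      _ ≤ _ := by gcongr

end HomogeneousNorm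

lemma lintegral_min_sq_mul_rpow_lt_top {n : ℕ} [NeZero n] {a : Fin n → ℝ}
    {ρ : EuclideanSpace ℝ (Fin n) → ℝ} (ha : ∀ j, 0 < a j)
    (hρpos : ∀ x : EuclideanSpace ℝ (Fin n), x ≠ 0 → 0 < ρ x)
    (hρhom : ∀ t : ℝ, 0 < t → ∀ x, ρ (dil n a t x) = t * ρ x) (hρ : Measurable ρ)
    (hρle : ∀ x : EuclideanSpace ℝ (Fin n), ‖x‖ ≤ 1 → ‖x‖ ≤ ρ x)
    {s : ℝ} (hs0 : 0 < s) (hs2 : s < 2) (c : ℝ) {D : ℝ} (hD : 0 ≤ D) :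
    ∫⁻ y, ENNReal.ofReal (min ((c * ρ y) ^ 2) D * ρ y ^ (-(∑ j, a j) - s)) < ⊤ := by
  set F := fun y => ENNReal.ofReal (min ((c * ρ y) ^ 2) D * ρ y ^ (-(∑ j, a j) - s))
  set A := fun k : ℤ => ρ ⁻¹' Set.Ico ((2 : ℝ) ^ k) (2 ^ (k + 1))
  set b := fun k : ℤ => min (4 * c ^ 2 * 4 ^ k) D * 2 ^ (∑ j, a j) * (2 ^ (-s)) ^ k
  have hcover : {0}ᶜ ⊆ ⋃ k, A k := fun y hy =>
    Set.mem_iUnion.2 (exists_mem_Ico_zpow (hρpos y hy) one_lt_two)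
  have hb : Summable b := by
    have hpq : 1 < 4 * (2 : ℝ) ^ (-s) := by
      rw [show (4 : ℝ) * 2 ^ (-s) = 2 ^ (2 - s) by
        rw [sub_eq_add_neg, Real.rpow_add two_pos]; norm_num]
      exact Real.one_lt_rpow one_lt_two (by linarith)
    refine ((summable_min_mul_zpow_mul_zpow (p := 4) (C := 4 * c ^ 2) (by positivity) hD
      (by positivity) (Real.rpow_lt_one_of_one_lt_of_neg one_lt_two (by linarith)) hpq).mul_right
      (2 ^ (∑ j, a j))).congr fun k => ?_
    simp only [b]
    ring
  calc ∫⁻ y, F y = ∫⁻ y in {0}ᶜ, F y := by rw [restrict_compl_singleton]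
    _ ≤ ∫⁻ y in ⋃ k, A k, F y := lintegral_mono_set hcover
    _ ≤ ∑' k, ∫⁻ y in A k, F y := lintegral_iUnion_le _ _
    _ ≤ ∑' k, ENNReal.ofReal (b k) * volume {y | ρ y < 1} :=
      ENNReal.tsum_le_tsum fun k => setLIntegral_shell_le hρhom hρ (fun j => (ha j).le) hs0.le c hD k
    _ = ENNReal.ofReal (∑' k, b k) * volume {y | ρ y < 1} := by
      rw [ENNReal.tsum_mul_right, ENNReal.ofReal_tsum_of_nonneg (fun k => by positivity) hb]
    _ < ⊤ := ENNReal.mul_lt_top ENNReal.ofReal_lt_top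
      (addHaar_setOf_lt_one_lt_top hρhom hρle volume ha)

theorem stmt_6_general (n : ℕ) (hn : 0 < n) (a : Fin n → ℝ) (ha : ∀ j, 1 ≤ a j)
    (ρ : EuclideanSpace ℝ (Fin n) → ℝ)
    (hρpos : ∀ x : EuclideanSpace ℝ (Fin n), x ≠ 0 → 0 < ρ x)
    (hρhom : ∀ t : ℝ, 0 < t → ∀ x, ρ (dil n a t x) = t * ρ x)
    (hρcont : Continuous ρ)
    (hρle : ∀ x : EuclideanSpace ℝ (Fin n), ‖x‖ ≤ 1 → ‖x‖ ≤ ρ x)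
    (α : ℝ) (hα : 0 < α ∧ α < 1) :
    ∃ C : ℝ, ∀ θ : EuclideanSpace ℝ (Fin n), ‖θ‖ = 1 →
      ∫⁻ y : EuclideanSpace ℝ (Fin n),
        ENNReal.ofReal (‖Complex.exp (2 * π * (∑ j, y j * θ j) * Complex.I) - 1‖ ^ 2
          * ρ y ^ (-(∑ j, a j) - 2 * α)) ≤ ENNReal.ofReal C := by
  have : NeZero n := ⟨hn.ne'⟩
  have ha' (j : Fin n) : 0 < a j := one_pos.trans_le (ha j)
  have hfin := lintegral_min_sq_mul_rpow_lt_top ha' hρpos hρhom hρcont.measurable hρle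
    (s := 2 * α) (by linarith) (by linarith) (2 * π) (D := 4) (by norm_num)
  refine ⟨_, fun θ hθ => (lintegral_mono fun y => ?_).trans (ENNReal.ofReal_toReal hfin.ne).ge⟩
  rcases eq_or_ne y 0 with rfl | hy
  · simp
  · exact ENNReal.ofReal_le_ofReal <| mul_le_mul_of_nonneg_right
      (sq_norm_exp_sum_mul_sub_one_le hρhom hρle ha' hθ y) (Real.rpow_nonneg (hρpos y hy).le _)

/-- uniform finiteness of ∫ |e^{2πi⟨y,θ⟩} − 1|² ρ(y)^{−γ−2α} dy over
unit vectors θ, where γ = Σ a_j and 0 < α < 1. -/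
theorem stmt_6 (n : ℕ) (hn : 0 < n) (a : Fin n → ℝ) (ha : ∀ j, 1 ≤ a j)
    (ρ : EuclideanSpace ℝ (Fin n) → ℝ)
    (hρ0 : ρ 0 = 0)
    (hρpos : ∀ x : EuclideanSpace ℝ (Fin n), x ≠ 0 → 0 < ρ x)
    (hρhom : ∀ t : ℝ, 0 < t → ∀ x, ρ (dil n a t x) = t * ρ x)
    (hρcont : Continuous ρ)
    (hρle : ∀ x : EuclideanSpace ℝ (Fin n), ‖x‖ ≤ 1 → ‖x‖ ≤ ρ x)
    (hρge : ∀ x : EuclideanSpace ℝ (Fin n), 1 ≤ ‖x‖ → ρ x ≤ ‖x‖)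
    (α : ℝ) (hα : 0 < α ∧ α < 1) :
    ∃ C : ℝ, ∀ θ : EuclideanSpace ℝ (Fin n), ‖θ‖ = 1 →
      ∫⁻ y : EuclideanSpace ℝ (Fin n),
        ENNReal.ofReal (‖Complex.exp (2 * π * (∑ j, y j * θ j) * Complex.I) - 1‖ ^ 2
          * ρ y ^ (-(∑ j, a j) - 2 * α)) ≤ ENNReal.ofReal C :=
  stmt_6_general n hn a ha ρ hρpos hρhom hρcont hρle α hα
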